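/- arXiv:2109.04900 — 6 statements merged into one kernel-verified Lean document; each statement's English description precedes it below -/
import Mathlib

section
/- In every 3-edge-coloring of the complete graph K_n on n vertices, either there is a monochromatic connected subgraph of diameter at most 3 on at least n/2 vertices, or every one of the three color classes is a spanning connected subgraph of K_n of diameter at most 4. -/
/-!
Suppose `u, v` are at distance more than `4` in colour `i`; let `j = c(uv)` and `k` be the third
colour. Write `D(p, q)` for the double star on the edge `pq` in the colour of `pq`: all its
vertices are joined to `p` or to `q` in that colour, so it has diameter at most `3`. If `D(u, v)`
has fewer than `n/2` vertices, each vertex `w` of its complement `R` has `c(uw), c(wv) ∈ {i, k}`,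
not both `i`. If some `a` of type `(i, k)` and some `b` of type `(k, i)` span a `j`-edge, then no
`i`-path of length two joins `u` or `a` to `v` or `b`, and the four double stars on
`uv, ub, av, ab` (coloured `j, k, k, j`) cover every vertex twice, so one has `n/2` vertices.
Otherwise `R` lies in the `k`-double star `D(a, v)` for any `a` of type `(i, k)`, or, if there is
no such `a`, in `D(u, w₀)` for any `w₀ ∈ R`.
-/

/-- The spanning subgraph of the complete graph on `Fin n` consisting of the
edges of color `i`, given an edge-coloring `c` with `r` colors. -/
def colorGraph {n r : ℕ} (c : Sym2 (Fin n) → Fin r) (i : Fin r) : SimpleGraph (Fin n) where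
  Adj u v := u ≠ v ∧ c s(u, v) = i
  symm := ⟨fun u v h => ⟨h.1.symm, by rw [Sym2.eq_swap]; exact h.2⟩⟩
  loopless := ⟨fun u h => h.1 rfl⟩

open Finset

namespace SimpleGraph

variable {V : Type*} (G : SimpleGraph V)

def ReachWithin (S : Set V) (d : ℕ) (x y : V) : Prop :=
  ∃ p : G.Walk x y, p.length ≤ d ∧ ∀ z ∈ p.support, z ∈ S

variable {G} {S : Set V} {d d' : ℕ} {x y z : V}

theorem ReachWithin.refl (hx : x ∈ S) : G.ReachWithin S 0 x x :=
  ⟨.nil, le_rfl, by simpa using hx⟩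

theorem ReachWithin.of_adj (h : G.Adj x y) (hx : x ∈ S) (hy : y ∈ S) : G.ReachWithin S 1 x y :=
  ⟨h.toWalk, le_rfl, by simp [hx, hy]⟩

theorem ReachWithin.mono (h : G.ReachWithin S d x y) (hd : d ≤ d') : G.ReachWithin S d' x y :=
  let ⟨p, hp, hpS⟩ := h
  ⟨p, hp.trans hd, hpS⟩

theorem ReachWithin.symm (h : G.ReachWithin S d x y) : G.ReachWithin S d y x :=
  let ⟨p, hp, hpS⟩ := h
  ⟨p.reverse, by simpa using hp, by simpa using hpS⟩

theorem ReachWithin.trans (h : G.ReachWithin S d x y) (h' : G.ReachWithin S d' y z) :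
    G.ReachWithin S (d + d') x z := by
  obtain ⟨p, hp, hpS⟩ := h
  obtain ⟨q, hq, hqS⟩ := h'
  refine ⟨p.append q, by simp only [Walk.length_append]; omega, fun w hw => ?_⟩
  rcases (Walk.mem_support_append_iff p q).mp hw with hw | hw
  exacts [hpS w hw, hqS w hw]

theorem reachWithin_three_of_cover {p q : V} (hp : p ∈ S) (hq : q ∈ S)
    (hpq : G.ReachWithin S 1 p q)
    (hS : ∀ x ∈ S, G.ReachWithin S 1 x p ∨ G.ReachWithin S 1 x q) :
    ∀ x ∈ S, ∀ y ∈ S, G.ReachWithin S 3 x y := by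
  have hub : ∀ x ∈ S, ∃ h, (h = p ∨ h = q) ∧ G.ReachWithin S 1 x h := fun x hx =>
    (hS x hx).elim (fun h => ⟨p, .inl rfl, h⟩) (fun h => ⟨q, .inr rfl, h⟩)
  intro x hx y hy
  obtain ⟨h₁, hh₁, hx₁⟩ := hub x hx
  obtain ⟨h₂, hh₂, hy₂⟩ := hub y hy
  have hmid : G.ReachWithin S 1 h₁ h₂ := by
    rcases hh₁ with rfl | rfl <;> rcases hh₂ with rfl | rfl
    exacts [(ReachWithin.refl hp).mono zero_le_one, hpq, hpq.symm,
      (ReachWithin.refl hq).mono zero_le_one]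
  exact (hx₁.trans hmid).trans hy₂.symm

end SimpleGraph

open SimpleGraph

theorem Finset.exists_mul_card_le_mul_card {α ι : Type*} [Fintype α] [Fintype ι] [Nonempty ι]
    [DecidableEq α] (s : ι → Finset α) {m : ℕ} (h : ∀ a, m ≤ #{i | a ∈ s i}) :
    ∃ i, Fintype.card α * m ≤ Fintype.card ι * #(s i) := by
  obtain ⟨i, -, hi⟩ := exists_max_image univ (fun i => #(s i)) univ_nonempty
  refine ⟨i, card_mul_le_card_mul (fun a i => a ∈ s i) (fun a _ => h a) fun j _ => ?_⟩
  simpa [bipartiteBelow] using hi j (mem_univ j)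

theorem Fin.exists_forall_eq_or_eq_or_eq {i j : Fin 3} (h : i ≠ j) :
    ∃ k, ∀ x, x = i ∨ x = j ∨ x = k := by
  revert i j
  decide

theorem half_lt_card_compl {n : ℕ} {s : Finset (Fin n)} (hs : (#s : ℚ) < n / 2) :
    (n : ℚ) / 2 < #sᶜ := by
  have h := card_compl_add_card s
  rw [Fintype.card_fin] at h
  have h' : (#sᶜ : ℚ) + #s = n := by exact_mod_cast h
  linarith

section Coloring

variable {n r : ℕ} (c : Sym2 (Fin n) → Fin r)

theorem reachWithin_colorGraph_of_color_eq {S : Set (Fin n)} {x y : Fin n} {e : Fin r}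
    (h : c s(x, y) = e) (hx : x ∈ S) (hy : y ∈ S) : (colorGraph c e).ReachWithin S 1 x y := by
  by_cases hxy : x = y
  · subst hxy
    exact (ReachWithin.refl hx).mono zero_le_one
  · exact .of_adj ⟨hxy, h⟩ hx hy

def doubleStar (p q : Fin n) : Finset (Fin n) :=
  {w | c s(p, w) = c s(p, q) ∨ c s(w, q) = c s(p, q)}

theorem reachWithin_doubleStar (p q : Fin n) :
    ∀ x ∈ doubleStar c p q, ∀ y ∈ doubleStar c p q,
      (colorGraph c (c s(p, q))).ReachWithin (doubleStar c p q) 3 x y := by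
  have mem : ∀ {w}, w ∈ (doubleStar c p q : Set (Fin n)) ↔
      c s(p, w) = c s(p, q) ∨ c s(w, q) = c s(p, q) := by simp [doubleStar]
  refine reachWithin_three_of_cover (mem.2 (.inr rfl)) (mem.2 (.inl rfl))
    (reachWithin_colorGraph_of_color_eq c rfl (mem.2 (.inr rfl)) (mem.2 (.inl rfl))) ?_
  intro x hx
  rcases mem.1 hx with h | h
  · exact .inl (reachWithin_colorGraph_of_color_eq c (by rwa [Sym2.eq_swap]) hx
      (mem.2 (.inr rfl)))
  · exact .inr (reachWithin_colorGraph_of_color_eq c h hx (mem.2 (.inl rfl)))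

theorem not_color_eq_and_color_eq_of_not_reachWithin {i : Fin r} {u v : Fin n} {d : ℕ}
    (hfar : ¬(colorGraph c i).ReachWithin Set.univ d u v) ⦃p q w : Fin n⦄ ⦃s t : ℕ⦄
    (hup : (colorGraph c i).ReachWithin Set.univ s u p)
    (hqv : (colorGraph c i).ReachWithin Set.univ t q v) (hd : s + 1 + 1 + t ≤ d) :
    ¬(c s(p, w) = i ∧ c s(w, q) = i) := by
  rintro ⟨hpw, hwq⟩
  have hpw := reachWithin_colorGraph_of_color_eq c hpw (Set.mem_univ _) (Set.mem_univ _)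
  have hwq := reachWithin_colorGraph_of_color_eq c hwq (Set.mem_univ _) (Set.mem_univ _)
  exact hfar ((((hup.trans hpw).trans hwq).trans hqv).mono hd)

/- If `w` sends no `i`-edge to the `P x`, each row gives a double star containing `w`; otherwise,
by `hfar`, it sends none to the `Q y`, and each column gives one. -/
theorem two_le_card_doubleStar_grid {P Q : Fin 2 → Fin n} {i : Fin r}
    (hfar : ∀ x y w, ¬(c s(P x, w) = i ∧ c s(w, Q y) = i))
    (hrow : ∀ x e, e ≠ i → ∃ y, c s(P x, Q y) = e)
    (hcol : ∀ y e, e ≠ i → ∃ x, c s(P x, Q y) = e) (w : Fin n) :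
    2 ≤ #{xy : Fin 2 × Fin 2 | w ∈ doubleStar c (P xy.1) (Q xy.2)} := by
  refine one_lt_card.2 ?_
  by_cases hP : ∀ x, c s(P x, w) ≠ i
  · obtain ⟨y₀, hy₀⟩ := hrow 0 _ (hP 0)
    obtain ⟨y₁, hy₁⟩ := hrow 1 _ (hP 1)
    exact ⟨(0, y₀), by simp [doubleStar, hy₀], (1, y₁), by simp [doubleStar, hy₁], by simp⟩
  · push Not at hP
    obtain ⟨x, hx⟩ := hP
    have hQ : ∀ y, c s(w, Q y) ≠ i := fun y hy => hfar x y w ⟨hx, hy⟩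
    obtain ⟨x₀, hx₀⟩ := hcol 0 _ (hQ 0)
    obtain ⟨x₁, hx₁⟩ := hcol 1 _ (hQ 1)
    exact ⟨(x₀, 0), by simp [doubleStar, hx₀], (x₁, 1), by simp [doubleStar, hx₁], by simp⟩

theorem exists_half_le_card_doubleStar_of_grid {P Q : Fin 2 → Fin n} {i : Fin r}
    (hfar : ∀ x y w, ¬(c s(P x, w) = i ∧ c s(w, Q y) = i))
    (hrow : ∀ x e, e ≠ i → ∃ y, c s(P x, Q y) = e)
    (hcol : ∀ y e, e ≠ i → ∃ x, c s(P x, Q y) = e) :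
    ∃ p q, (n : ℚ) / 2 ≤ #(doubleStar c p q) := by
  obtain ⟨⟨x, y⟩, h⟩ := exists_mul_card_le_mul_card (fun xy : Fin 2 × Fin 2 =>
    doubleStar c (P xy.1) (Q xy.2)) (two_le_card_doubleStar_grid c hfar hrow hcol)
  refine ⟨P x, Q y, ?_⟩
  simp only [Fintype.card_fin, Fintype.card_prod] at h
  have : ((n * 2 : ℕ) : ℚ) ≤ ((2 * 2 * #(doubleStar c (P x) (Q y)) : ℕ) : ℚ) := by exact_mod_cast h
  push_cast at this
  linarith

end Coloring

section ThreeColorings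

variable {n : ℕ} {c : Sym2 (Fin n) → Fin 3} {i k : Fin 3} {u v : Fin n}

theorem exists_half_le_card_doubleStar_of_square {a b : Fin n}
    (hfar : ¬(colorGraph c i).ReachWithin Set.univ 4 u v)
    (hk : ∀ x, x = i ∨ x = c s(u, v) ∨ x = k) (hua : c s(u, a) = i) (hav : c s(a, v) = k)
    (hub : c s(u, b) = k) (hbv : c s(b, v) = i) (hab : c s(a, b) = c s(u, v)) :
    ∃ p q, (n : ℚ) / 2 ≤ #(doubleStar c p q) := by
  have hedge : ∀ {p q}, c s(p, q) = i → (colorGraph c i).ReachWithin Set.univ 1 p q :=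
    fun h => reachWithin_colorGraph_of_color_eq c h (Set.mem_univ _) (Set.mem_univ _)
  have hpath := not_color_eq_and_color_eq_of_not_reachWithin c hfar
  refine exists_half_le_card_doubleStar_of_grid c (P := ![u, a]) (Q := ![v, b]) (i := i) ?_ ?_ ?_
  · simp only [Fin.forall_fin_two, Matrix.cons_val_zero, Matrix.cons_val_one]
    have hu := ReachWithin.refl (G := colorGraph c i) (Set.mem_univ u)
    have hv := ReachWithin.refl (G := colorGraph c i) (Set.mem_univ v)
    exact ⟨⟨fun _ => hpath hu hv (by norm_num), fun _ => hpath hu (hedge hbv) (by norm_num)⟩,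
      fun _ => hpath (hedge hua) hv (by norm_num),
      fun _ => hpath (hedge hua) (hedge hbv) (by norm_num)⟩
  all_goals
    simp only [Fin.forall_fin_two, Fin.exists_fin_two, Matrix.cons_val_zero,
      Matrix.cons_val_one, hav, hub, hab]
    refine ⟨fun e he => ?_, fun e he => ?_⟩ <;> rcases hk e with rfl | rfl | rfl <;> simp_all

theorem colors_of_mem_compl_doubleStar (hk : ∀ x, x = i ∨ x = c s(u, v) ∨ x = k) {w : Fin n}
    (hw : w ∈ (doubleStar c u v)ᶜ) :
    (c s(u, w) = i ∨ c s(u, w) = k) ∧ (c s(w, v) = i ∨ c s(w, v) = k) := by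
  simp only [doubleStar, mem_compl, mem_filter, mem_univ, true_and, not_or] at hw
  exact ⟨(hk _).imp_right (Or.resolve_left · hw.1), (hk _).imp_right (Or.resolve_left · hw.2)⟩

theorem compl_doubleStar_subset_doubleStar_of_not_square {a : Fin n}
    (hfar : ¬(colorGraph c i).ReachWithin Set.univ 4 u v)
    (hk : ∀ x, x = i ∨ x = c s(u, v) ∨ x = k) (hua : c s(u, a) = i) (hav : c s(a, v) = k)
    (hsquare : ∀ b, c s(u, b) = k → c s(b, v) = i → c s(a, b) ≠ c s(u, v)) :
    (doubleStar c u v)ᶜ ⊆ doubleStar c a v := by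
  have hpath := not_color_eq_and_color_eq_of_not_reachWithin c hfar
  have hu := ReachWithin.refl (G := colorGraph c i) (Set.mem_univ u)
  have hv := ReachWithin.refl (G := colorGraph c i) (Set.mem_univ v)
  have hua' := reachWithin_colorGraph_of_color_eq c hua (Set.mem_univ _) (Set.mem_univ _)
  intro w hw
  obtain ⟨hu_w, hw_v⟩ := colors_of_mem_compl_doubleStar hk hw
  simp only [doubleStar, mem_filter, mem_univ, true_and, hav]
  rcases hw_v with hwv | hwv
  · have huw : c s(u, w) = k := hu_w.resolve_left fun huw => hpath hu hv (by norm_num) ⟨huw, hwv⟩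
    rcases hk (c s(a, w)) with haw | haw | haw
    · exact absurd ⟨haw, hwv⟩ (hpath hua' hv (by norm_num))
    · exact absurd haw (hsquare w huw hwv)
    · exact .inl haw
  · exact .inr hwv

theorem compl_doubleStar_subset_doubleStar_of_forall_ne {w₀ : Fin n}
    (hfar : ¬(colorGraph c i).ReachWithin Set.univ 4 u v)
    (hk : ∀ x, x = i ∨ x = c s(u, v) ∨ x = k) (hA : ∀ a, c s(u, a) = i → c s(a, v) ≠ k)
    (hw₀ : w₀ ∈ (doubleStar c u v)ᶜ) :
    (doubleStar c u v)ᶜ ⊆ doubleStar c u w₀ := by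
  have hu := ReachWithin.refl (G := colorGraph c i) (Set.mem_univ u)
  have hv := ReachWithin.refl (G := colorGraph c i) (Set.mem_univ v)
  have hRu : ∀ w ∈ (doubleStar c u v)ᶜ, c s(u, w) = k := fun w hw =>
    have ⟨hu_w, hw_v⟩ := colors_of_mem_compl_doubleStar hk hw
    hu_w.resolve_left fun huw => hw_v.elim
      (fun hwv => not_color_eq_and_color_eq_of_not_reachWithin c hfar hu hv (by norm_num)
        ⟨huw, hwv⟩) (hA w huw)
  intro w hw
  simp only [doubleStar, mem_filter, mem_univ, true_and]
  exact .inl ((hRu w hw).trans (hRu w₀ hw₀).symm)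

theorem exists_half_le_card_doubleStar (hfar : ¬(colorGraph c i).ReachWithin Set.univ 4 u v) :
    ∃ p q, (n : ℚ) / 2 ≤ #(doubleStar c p q) := by
  have hij : i ≠ c s(u, v) := fun h => hfar ((reachWithin_colorGraph_of_color_eq c h.symm
    (Set.mem_univ _) (Set.mem_univ _)).mono (by norm_num))
  obtain ⟨k, hk⟩ := Fin.exists_forall_eq_or_eq_or_eq hij
  by_cases hS : (n : ℚ) / 2 ≤ #(doubleStar c u v)
  · exact ⟨u, v, hS⟩
  have hR := half_lt_card_compl (not_le.1 hS)
  have hle : ∀ {T}, (doubleStar c u v)ᶜ ⊆ T → (n : ℚ) / 2 ≤ #T :=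
    fun h => hR.le.trans (mod_cast card_le_card h)
  by_cases hsquare : ∃ a b, c s(u, a) = i ∧ c s(a, v) = k ∧ c s(u, b) = k ∧ c s(b, v) = i ∧
      c s(a, b) = c s(u, v)
  · obtain ⟨a, b, hua, hav, hub, hbv, hab⟩ := hsquare
    exact exists_half_le_card_doubleStar_of_square hfar hk hua hav hub hbv hab
  push Not at hsquare
  by_cases hA : ∃ a, c s(u, a) = i ∧ c s(a, v) = k
  · obtain ⟨a, hua, hav⟩ := hA
    exact ⟨a, v, hle (compl_doubleStar_subset_doubleStar_of_not_square hfar hk hua hav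
      (hsquare a · hua hav))⟩
  · push Not at hA
    obtain ⟨w₀, hw₀⟩ : (doubleStar c u v)ᶜ.Nonempty :=
      card_pos.1 (by exact_mod_cast (by positivity : (0 : ℚ) ≤ n / 2).trans_lt hR)
    exact ⟨u, w₀, hle (compl_doubleStar_subset_doubleStar_of_forall_ne hfar hk hA hw₀)⟩

end ThreeColorings

/-- In every 3-edge-coloring of `K_n`, either there is a monochromatic connected
subgraph of diameter at most 3 on at least `n/2` vertices, or every color class is
a spanning connected subgraph of diameter at most 4. -/
theorem monochromatic_diam_three_or_all_spanning_diam_four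
    (n : ℕ) (c : Sym2 (Fin n) → Fin 3) :
    (∃ (i : Fin 3) (S : Finset (Fin n)),
        (n : ℚ) / 2 ≤ S.card ∧
        ∀ u ∈ S, ∀ v ∈ S, ∃ p : (colorGraph c i).Walk u v,
          p.length ≤ 3 ∧ ∀ x ∈ p.support, x ∈ S) ∨
    (∀ (i : Fin 3) (u v : Fin n), ∃ p : (colorGraph c i).Walk u v, p.length ≤ 4) := by
  refine or_iff_not_imp_right.2 fun h => ?_
  push Not at h
  obtain ⟨i, u, v, hfar⟩ := h
  obtain ⟨p, q, hpq⟩ := exists_half_le_card_doubleStar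
    (fun ⟨w, hw, _⟩ => (hfar w).not_ge hw : ¬(colorGraph c i).ReachWithin Set.univ 4 u v)
  exact ⟨c s(p, q), doubleStar c p q, hpq, reachWithin_doubleStar c p q⟩
end

section
/- In every 3-edge-coloring of the complete graph K_n on n vertices, there is a monochromatic connected subgraph of diameter at most 4 on at least n/2 vertices. -/
open Finset

namespace SimpleGraph

variable {V : Type*} {G : SimpleGraph V} {v x y z : V}

noncomputable def ballFinset [Fintype V] (G : SimpleGraph V) (v : V) (r : ℕ) : Finset V := by
  classical exact {x | G.edist v x ≤ r}

theorem mem_ballFinset [Fintype V] {r : ℕ} : x ∈ G.ballFinset v r ↔ G.edist v x ≤ r := by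
  classical simp [ballFinset]

theorem exists_walk_support_edist_le {r : ℕ} (h : G.edist v x ≤ r) :
    ∃ p : G.Walk v x, p.length ≤ r ∧ ∀ y ∈ p.support, G.edist v y ≤ r := by
  classical
  obtain ⟨p, hp⟩ := exists_walk_of_edist_ne_top (ne_top_of_le_ne_top (ENat.natCast_ne_top r) h)
  refine ⟨p, by exact_mod_cast hp ▸ h, fun y hy => ?_⟩
  calc G.edist v y ≤ (p.takeUntil y hy).length := edist_le _
    _ ≤ p.length := by exact_mod_cast p.length_takeUntil_le_length hy
    _ = G.edist v x := hp
    _ ≤ r := h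

theorem exists_walk_of_mem_ballFinset [Fintype V] {r : ℕ} (hx : x ∈ G.ballFinset v r)
    (hy : y ∈ G.ballFinset v r) :
    ∃ p : G.Walk x y, p.length ≤ 2 * r ∧ ∀ z ∈ p.support, z ∈ G.ballFinset v r := by
  obtain ⟨p, hp, hps⟩ := exists_walk_support_edist_le (mem_ballFinset.1 hx)
  obtain ⟨q, hq, hqs⟩ := exists_walk_support_edist_le (mem_ballFinset.1 hy)
  refine ⟨p.reverse.append q, by simp only [Walk.length_append, Walk.length_reverse]; omega,
    fun z hz => mem_ballFinset.2 ?_⟩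
  rcases (Walk.mem_support_append_iff _ _).1 hz with hz | hz
  · exact hps z (by simpa using hz)
  · exact hqs z hz

theorem self_mem_ballFinset [Fintype V] {r : ℕ} : v ∈ G.ballFinset v r :=
  mem_ballFinset.2 (by simp)

theorem mem_ballFinset_two_of_adj [Fintype V] (h : G.Adj v x) : x ∈ G.ballFinset v 2 :=
  mem_ballFinset.2 (by rw [edist_eq_one_iff_adj.2 h]; norm_num)

theorem mem_ballFinset_two_of_adj_of_adj [Fintype V] (h₁ : G.Adj v z) (h₂ : G.Adj z x) :
    x ∈ G.ballFinset v 2 :=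
  mem_ballFinset.2 ((edist_le (.cons h₁ (.cons h₂ .nil))).trans (by simp))

end SimpleGraph

open SimpleGraph

section ThreeColoring

variable {n : ℕ} {c : Sym2 (Fin n) → Fin 3} {i j k : Fin 3} {u v w x y z z₀ w₀ : Fin n}

noncomputable def colorMidpoints {r : ℕ} (c : Sym2 (Fin n) → Fin r) (i j : Fin r) (v u : Fin n) :
    Finset (Fin n) := by
  classical exact {z | (colorGraph c i).Adj v z ∧ (colorGraph c j).Adj z u}

theorem mem_colorMidpoints {r : ℕ} {c : Sym2 (Fin n) → Fin r} {i j : Fin r} :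
    z ∈ colorMidpoints c i j v u ↔ (colorGraph c i).Adj v z ∧ (colorGraph c j).Adj z u := by
  classical simp [colorMidpoints]

theorem colorGraph_adj_or (hxy : x ≠ y) (hij : i ≠ j) (hik : i ≠ k) (hjk : j ≠ k) :
    (colorGraph c i).Adj x y ∨ (colorGraph c j).Adj x y ∨ (colorGraph c k).Adj x y := by
  have h3 : ∀ a i j k : Fin 3, i ≠ j → i ≠ k → j ≠ k → a = i ∨ a = j ∨ a = k := by decide
  rcases h3 (c s(x, y)) i j k hij hik hjk with h | h | h
  exacts [.inl ⟨hxy, h⟩, .inr (.inl ⟨hxy, h⟩), .inr (.inr ⟨hxy, h⟩)]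

theorem colorMidpoints_subset_inter :
    colorMidpoints c i j v u ⊆ (colorGraph c i).ballFinset v 2 ∩ (colorGraph c j).ballFinset u 2 :=
  fun _ hz => mem_inter.2
    ⟨mem_ballFinset_two_of_adj (mem_colorMidpoints.1 hz).1,
      mem_ballFinset_two_of_adj (mem_colorMidpoints.1 hz).2.symm⟩

theorem colorGraph_adj_of_mem_colorMidpoints (hij : i ≠ j) (hik : i ≠ k) (hjk : j ≠ k)
    (hz : z ∈ colorMidpoints c i j v u)
    (hw : w ∉ (colorGraph c i).ballFinset v 2 ∪ (colorGraph c j).ballFinset u 2) :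
    (colorGraph c k).Adj z w := by
  obtain ⟨hvz, hzu⟩ := mem_colorMidpoints.1 hz
  simp only [mem_union, not_or] at hw
  have hzw : z ≠ w := by
    rintro rfl
    exact hw.1 (mem_ballFinset_two_of_adj hvz)
  rcases colorGraph_adj_or hzw hij hik hjk with h | h | h
  · exact absurd (mem_ballFinset_two_of_adj_of_adj hvz h) hw.1
  · exact absurd (mem_ballFinset_two_of_adj_of_adj hzu.symm h) hw.2
  · exact h

theorem union_compl_subset_ballFinset (hij : i ≠ j) (hik : i ≠ k) (hjk : j ≠ k)
    (hz₀ : z₀ ∈ colorMidpoints c i j v u)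
    (hw₀ : w₀ ∉ (colorGraph c i).ballFinset v 2 ∪ (colorGraph c j).ballFinset u 2) :
    colorMidpoints c i j v u ∪ ((colorGraph c i).ballFinset v 2 ∪ (colorGraph c j).ballFinset u 2)ᶜ
      ⊆ (colorGraph c k).ballFinset z₀ 2 := by
  intro x hx
  rcases mem_union.1 hx with hx | hx
  · by_cases hxz : x = z₀
    · exact hxz ▸ self_mem_ballFinset
    · exact mem_ballFinset_two_of_adj_of_adj
        (colorGraph_adj_of_mem_colorMidpoints hij hik hjk hz₀ hw₀)
        (colorGraph_adj_of_mem_colorMidpoints hij hik hjk hx hw₀).symm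
  · exact mem_ballFinset_two_of_adj
      (colorGraph_adj_of_mem_colorMidpoints hij hik hjk hz₀ (mem_compl.1 hx))

theorem four_mul_card_colorMidpoints_add_three_le
    (hsmall : ∀ i v, 2 * #((colorGraph c i).ballFinset v 2) < n)
    (hij : i ≠ j) (hik : i ≠ k) (hjk : j ≠ k) (v u : Fin n) :
    4 * #(colorMidpoints c i j v u) + 3 ≤ n := by
  set Bi := (colorGraph c i).ballFinset v 2
  set Bj := (colorGraph c j).ballFinset u 2
  set Z := colorMidpoints c i j v u
  have hBi : 2 * #Bi < n := hsmall i v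
  have hBj : 2 * #Bj < n := hsmall j u
  have hcompl : #(Bi ∪ Bj)ᶜ + #(Bi ∪ Bj) = n := by rw [card_compl_add_card, Fintype.card_fin]
  have hincl_excl := card_union_add_card_inter Bi Bj
  have hZ : #Z ≤ #(Bi ∩ Bj) := card_le_card colorMidpoints_subset_inter
  obtain ⟨w₀, hw₀⟩ : (Bi ∪ Bj)ᶜ.Nonempty := by
    rw [← card_pos]
    have := card_union_le Bi Bj
    omega
  rcases Z.eq_empty_or_nonempty with hZ₀ | ⟨z₀, hz₀⟩
  · have : 0 < #Bi := card_pos.2 ⟨v, self_mem_ballFinset⟩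
    rw [hZ₀, card_empty]
    omega
  have hdisj : Disjoint Z (Bi ∪ Bj)ᶜ :=
    disjoint_compl_right.mono_left
      (colorMidpoints_subset_inter.trans (inter_subset_left.trans subset_union_left))
  have hBk : #Z + #(Bi ∪ Bj)ᶜ ≤ #((colorGraph c k).ballFinset z₀ 2) := by
    rw [← card_union_of_disjoint hdisj]
    exact card_le_card (union_compl_subset_ballFinset hij hik hjk hz₀ (mem_compl.1 hw₀))
  have : 2 * #((colorGraph c k).ballFinset z₀ 2) < n := hsmall k z₀
  omega

theorem exists_le_two_mul_card_ballFinset (c : Sym2 (Fin n) → Fin 3) (hn : 0 < n) :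
    ∃ i v, n ≤ 2 * #((colorGraph c i).ballFinset v 2) := by
  by_contra! hsmall
  have h01 : (0 : Fin 3) ≠ 1 := by decide
  have h02 : (0 : Fin 3) ≠ 2 := by decide
  have h12 : (1 : Fin 3) ≠ 2 := by decide
  set v : Fin n := ⟨0, hn⟩
  obtain ⟨u, -, hu⟩ : ∃ u ∈ univ,
      u ∉ (colorGraph c 0).ballFinset v 2 ∪ (colorGraph c 1).ballFinset v 2 := by
    refine exists_mem_notMem_of_card_lt_card ?_
    have := card_union_le ((colorGraph c 0).ballFinset v 2) ((colorGraph c 1).ballFinset v 2)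
    have := hsmall 0 v
    have := hsmall 1 v
    rw [card_univ, Fintype.card_fin]
    omega
  simp only [mem_union, not_or] at hu
  have huv : v ≠ u := by
    rintro rfl
    exact hu.1 self_mem_ballFinset
  have hvu : (colorGraph c 2).Adj v u := by
    rcases colorGraph_adj_or huv h01 h02 h12 with h | h | h
    · exact absurd (mem_ballFinset_two_of_adj h) hu.1
    · exact absurd (mem_ballFinset_two_of_adj h) hu.2
    · exact h
  have hsub : (colorMidpoints c 0 1 v u ∪ colorMidpoints c 1 0 v u)ᶜ ⊆ (colorGraph c 2).ballFinset v 2 := fun z hz => by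
    simp only [mem_compl, mem_union, mem_colorMidpoints, not_or, not_and] at hz
    by_cases hzv : v = z
    · exact hzv ▸ self_mem_ballFinset
    by_cases hzu : z = u
    · exact hzu ▸ mem_ballFinset_two_of_adj hvu
    rcases colorGraph_adj_or hzv h01 h02 h12 with hv0 | hv1 | hv2
    · rcases colorGraph_adj_or hzu h01 h02 h12 with hu0 | hu1 | hu2
      · exact absurd (mem_ballFinset_two_of_adj_of_adj hv0 hu0) hu.1
      · exact absurd hu1 (hz.1 hv0)
      · exact mem_ballFinset_two_of_adj_of_adj hvu hu2.symm
    · rcases colorGraph_adj_or hzu h01 h02 h12 with hu0 | hu1 | hu2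
      · exact absurd hu0 (hz.2 hv1)
      · exact absurd (mem_ballFinset_two_of_adj_of_adj hv1 hu1) hu.2
      · exact mem_ballFinset_two_of_adj_of_adj hvu hu2.symm
    · exact mem_ballFinset_two_of_adj hv2
  have := card_le_card hsub
  have := card_compl_add_card (colorMidpoints c 0 1 v u ∪ colorMidpoints c 1 0 v u)
  have := card_union_le (colorMidpoints c 0 1 v u) (colorMidpoints c 1 0 v u)
  have := four_mul_card_colorMidpoints_add_three_le hsmall h01 h02 h12 v u
  have := four_mul_card_colorMidpoints_add_three_le hsmall h01.symm h12 h02 v u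
  have := hsmall 2 v
  rw [Fintype.card_fin] at *
  omega

end ThreeColoring

/-- In every 3-edge-coloring of `K_n` there is a monochromatic connected subgraph
of diameter at most 4 on at least `n/2` vertices. -/
theorem monochromatic_diam_four_half
    (n : ℕ) (c : Sym2 (Fin n) → Fin 3) :
    ∃ (i : Fin 3) (S : Finset (Fin n)),
      (n : ℚ) / 2 ≤ S.card ∧
      ∀ u ∈ S, ∀ v ∈ S, ∃ p : (colorGraph c i).Walk u v,
        p.length ≤ 4 ∧ ∀ x ∈ p.support, x ∈ S := by
  rcases Nat.eq_zero_or_pos n with rfl | hn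
  · exact ⟨0, ∅, by simp, by simp⟩
  obtain ⟨i, v, hcard⟩ := exists_le_two_mul_card_ballFinset c hn
  refine ⟨i, (colorGraph c i).ballFinset v 2, ?_,
    fun _ hx _ hy => exists_walk_of_mem_ballFinset hx hy⟩
  have : (n : ℚ) ≤ 2 * #((colorGraph c i).ballFinset v 2) := by exact_mod_cast hcard
  linarith
end

section
/- For every integer r ≥ 2, in every r-edge-coloring of the complete graph K_n on n vertices there is a monochromatic connected subgraph on at least n/(r-1) vertices. -/
/-!
Fix a colour `j`, let `A` be the `j`-component of some vertex and `B` its complement. An edge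
between `A` and `B` has a colour `i ≠ j`, and its ends lie in a common `i`-component. Suppose every
monochromatic component has at most `s` vertices. For a fixed colour `i`, the pairs of `A × B`
lying in a common `i`-component number `∑ x_K y_K`, where `K` runs over the `i`-components,
`x_K = |K ∩ A|`, `y_K = |K ∩ B|` and `x_K + y_K ≤ s`; convexity gives
`(|A| + |B|) ∑ x_K y_K ≤ s |A| |B|`. Summing over the `r - 1` colours `i ≠ j` yields
`n |A| |B| ≤ (r - 1) s |A| |B|`. If `B` is empty, `A` itself is a component and `n ≤ s`.
-/

open Finset

section WeightedSum

variable {R : Type*} [CommRing R] [LinearOrder R] [IsStrictOrderedRing R]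

-- The weights `b ^ 2`, `a ^ 2` make the right side sum to `s a b (a + b)` for `a = ∑ x`, `b = ∑ y`.
lemma sq_add_mul_mul_le {a b x y s : R} (hx : 0 ≤ x) (hy : 0 ≤ y) (hxy : x + y ≤ s) :
    (a + b) ^ 2 * (x * y) ≤ s * (b ^ 2 * x + a ^ 2 * y) := by
  have := mul_le_mul_of_nonneg_right hxy (by positivity : 0 ≤ b ^ 2 * x + a ^ 2 * y)
  nlinarith [sq_nonneg (b * x - a * y)]

lemma sum_add_sum_mul_sum_mul_le {ι : Type*} (t : Finset ι) (x y : ι → R) (s : R)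
    (hx : ∀ k ∈ t, 0 ≤ x k) (hy : ∀ k ∈ t, 0 ≤ y k) (hs : ∀ k ∈ t, x k + y k ≤ s) :
    (∑ k ∈ t, x k + ∑ k ∈ t, y k) * ∑ k ∈ t, x k * y k
      ≤ s * ((∑ k ∈ t, x k) * ∑ k ∈ t, y k) := by
  set a := ∑ k ∈ t, x k
  set b := ∑ k ∈ t, y k
  have key : (a + b) * ((a + b) * ∑ k ∈ t, x k * y k) ≤ (a + b) * (s * (a * b)) :=
    calc (a + b) * ((a + b) * ∑ k ∈ t, x k * y k)
        = ∑ k ∈ t, (a + b) ^ 2 * (x k * y k) := by rw [← mul_assoc, ← sq, mul_sum]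
      _ ≤ ∑ k ∈ t, s * (b ^ 2 * x k + a ^ 2 * y k) :=
        sum_le_sum fun k hk => sq_add_mul_mul_le (hx k hk) (hy k hk) (hs k hk)
      _ = (a + b) * (s * (a * b)) := by
        rw [← mul_sum, sum_add_distrib, ← mul_sum, ← mul_sum]; ring
  rcases (add_nonneg (sum_nonneg hx) (sum_nonneg hy)).eq_or_lt with hab | hab
  · have ha : a = 0 := by linarith [sum_nonneg hx, sum_nonneg hy]
    have hb : b = 0 := by linarith [sum_nonneg hx, sum_nonneg hy]
    simp [ha, hb]
  · exact le_of_mul_le_mul_left key hab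

end WeightedSum

section Fibers

variable {V κ : Type*} [Fintype κ] [DecidableEq κ]

lemma card_filter_prod_eq_sum_mul (A B : Finset V) (f : V → κ) :
    #{p ∈ A ×ˢ B | f p.1 = f p.2} = ∑ k, #{u ∈ A | f u = k} * #{v ∈ B | f v = k} := by
  rw [card_eq_sum_card_fiberwise (f := fun p => f p.1) (t := univ)
    fun _ _ => mem_coe.2 (mem_univ _)]
  refine sum_congr rfl fun k _ => ?_
  rw [← card_product, filter_filter]
  congr 1
  ext ⟨u, v⟩
  simp only [mem_filter, mem_product]
  constructor
  · rintro ⟨⟨hu, hv⟩, huv, rfl⟩; exact ⟨⟨hu, rfl⟩, hv, huv.symm⟩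
  · rintro ⟨⟨hu, rfl⟩, hv, hvk⟩; exact ⟨⟨hu, hv⟩, hvk.symm, rfl⟩

lemma card_add_card_mul_card_filter_prod_le [DecidableEq V] {A B : Finset V}
    (hAB : Disjoint A B) (f : V → κ) (s : ℕ) (hs : ∀ k, #{v ∈ A ∪ B | f v = k} ≤ s) :
    (#A + #B) * #{p ∈ A ×ˢ B | f p.1 = f p.2} ≤ s * (#A * #B) := by
  have hfiber : ∀ k, #{u ∈ A | f u = k} + #{v ∈ B | f v = k} ≤ s := fun k => by
    rw [← card_union_of_disjoint (disjoint_filter_filter hAB), ← filter_union]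
    exact hs k
  have key := sum_add_sum_mul_sum_mul_le (R := ℚ) univ (fun k => (#{u ∈ A | f u = k} : ℚ))
    (fun k => (#{v ∈ B | f v = k} : ℚ)) s (fun _ _ => Nat.cast_nonneg _)
    (fun _ _ => Nat.cast_nonneg _) fun k _ => by exact_mod_cast hfiber k
  simp only [← Nat.cast_sum, ← Nat.cast_mul, ← card_eq_sum_card_fiberwise
    (fun _ _ => mem_coe.2 (mem_univ _)), ← card_filter_prod_eq_sum_mul] at key
  exact_mod_cast key

end Fibers

namespace SimpleGraph

variable {V : Type*} {G : SimpleGraph V}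

lemma ConnectedComponent.exists_walk_support_subset_supp {C : G.ConnectedComponent} {u w : V}
    (hu : u ∈ C.supp) (hw : w ∈ C.supp) : ∃ p : G.Walk u w, ∀ x ∈ p.support, x ∈ C.supp := by
  classical
  obtain ⟨p⟩ := C.reachable_of_mem_supp hu hw
  refine ⟨p, fun x hx => ?_⟩
  rw [mem_supp_iff] at hu ⊢
  exact hu ▸ (ConnectedComponent.sound ⟨p.takeUntil x hx⟩).symm

end SimpleGraph

open SimpleGraph

open scoped Classical

section Coloring

variable {n r : ℕ}

lemma card_mul_card_compl_le_sum_card_filter {c : Sym2 (Fin n) → Fin r} {j : Fin r}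
    {A : Finset (Fin n)} (hA : ∀ u ∈ A, ∀ v, (colorGraph c j).Adj u v → v ∈ A) :
    #A * #Aᶜ ≤ ∑ i ∈ univ.erase j, #{p ∈ A ×ˢ Aᶜ |
      (colorGraph c i).connectedComponentMk p.1 = (colorGraph c i).connectedComponentMk p.2} := by
  refine (card_product A Aᶜ).symm.trans_le ((card_le_card ?_).trans card_biUnion_le)
  rintro ⟨u, v⟩ huv
  obtain ⟨hu, hv⟩ := mem_product.1 huv
  have hadj : (colorGraph c (c s(u, v))).Adj u v := ⟨by rintro rfl; exact mem_compl.1 hv hu, rfl⟩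
  refine mem_biUnion.2 ⟨c s(u, v), mem_erase.2 ⟨fun h => ?_, mem_univ _⟩,
    mem_filter.2 ⟨huv, ConnectedComponent.connectedComponentMk_eq_of_adj hadj⟩⟩
  exact mem_compl.1 hv (hA u hu v (h ▸ hadj))

lemma card_le_mul_of_forall_card_component_le (hr : 2 ≤ r) (c : Sym2 (Fin n) → Fin r) (s : ℕ)
    (hs : ∀ i (C : (colorGraph c i).ConnectedComponent),
      #{v | (colorGraph c i).connectedComponentMk v = C} ≤ s) :
    n ≤ (r - 1) * s := by
  rcases Nat.eq_zero_or_pos n with rfl | hn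
  · exact Nat.zero_le _
  set j : Fin r := ⟨0, by omega⟩
  set w : Fin n := ⟨0, hn⟩
  set A : Finset (Fin n) :=
    {v | (colorGraph c j).connectedComponentMk v = (colorGraph c j).connectedComponentMk w}
  have hn' : #A + #Aᶜ = n := by rw [card_add_card_compl, Fintype.card_fin]
  rcases Aᶜ.eq_empty_or_nonempty with hB | hB
  · rw [hB, card_empty, add_zero] at hn'
    calc n = #A := hn'.symm
      _ ≤ s := hs j _
      _ ≤ (r - 1) * s := Nat.le_mul_of_pos_left s (by omega)
  have hA : ∀ u ∈ A, ∀ v, (colorGraph c j).Adj u v → v ∈ A := fun u hu v huv => by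
    simp only [A, mem_filter_univ] at hu ⊢
    exact (ConnectedComponent.connectedComponentMk_eq_of_adj huv).symm.trans hu
  set N : Fin r → ℕ := fun i => #{p ∈ A ×ˢ Aᶜ |
    (colorGraph c i).connectedComponentMk p.1 = (colorGraph c i).connectedComponentMk p.2}
  have hcover : #A * #Aᶜ ≤ ∑ i ∈ univ.erase j, N i := card_mul_card_compl_le_sum_card_filter hA
  have hcolor : ∀ i, n * N i ≤ s * (#A * #Aᶜ) := fun i => by
    have := card_add_card_mul_card_filter_prod_le (disjoint_compl_right (a := A))
      (colorGraph c i).connectedComponentMk s fun C =>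
        (card_le_card (filter_subset_filter _ (subset_univ _))).trans (hs i C)
    rwa [hn'] at this
  have hpos : 0 < #A * #Aᶜ := mul_pos (card_pos.2 ⟨w, by simp [A]⟩) (card_pos.2 hB)
  refine le_of_mul_le_mul_right ?_ hpos
  calc n * (#A * #Aᶜ)
      ≤ ∑ i ∈ univ.erase j, n * N i := by rw [← mul_sum]; exact Nat.mul_le_mul_left _ hcover
    _ ≤ ∑ i ∈ univ.erase j, s * (#A * #Aᶜ) := sum_le_sum fun i _ => hcolor i
    _ = (r - 1) * s * (#A * #Aᶜ) := by
        rw [sum_const, card_erase_of_mem (mem_univ _), card_univ, Fintype.card_fin, smul_eq_mul,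
          mul_assoc]

end Coloring

/-- For `r ≥ 2`, every `r`-edge-coloring of `K_n` contains a monochromatic
connected subgraph on at least `n/(r-1)` vertices. -/
theorem monochromatic_component_gyarfas
    (n r : ℕ) (hr : 2 ≤ r) (c : Sym2 (Fin n) → Fin r) :
    ∃ (i : Fin r) (S : Finset (Fin n)),
      (n : ℚ) / ((r : ℚ) - 1) ≤ S.card ∧
      ∀ u ∈ S, ∀ v ∈ S, ∃ p : (colorGraph c i).Walk u v, ∀ x ∈ p.support, x ∈ S := by
  rcases Nat.eq_zero_or_pos n with rfl | hn
  · exact ⟨⟨0, by omega⟩, ∅, by simp, by simp⟩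
  obtain ⟨⟨i, v⟩, -, hmax⟩ := exists_max_image univ
    (fun p : Fin r × Fin n => #{u | (colorGraph c p.1).connectedComponentMk u =
      (colorGraph c p.1).connectedComponentMk p.2}) ⟨(⟨0, by omega⟩, ⟨0, hn⟩), mem_univ _⟩
  set C := (colorGraph c i).connectedComponentMk v
  refine ⟨i, ({u | (colorGraph c i).connectedComponentMk u = C} : Finset (Fin n)), ?_,
    fun u hu w hw => ?_⟩
  · have hbound := card_le_mul_of_forall_card_component_le hr c _ fun j D =>
      D.ind fun w => hmax (j, w) (mem_univ _)
    have hr' : (2 : ℚ) ≤ r := by exact_mod_cast hr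
    rw [div_le_iff₀ (by linarith), mul_comm, ← Nat.cast_pred (by omega)]
    exact_mod_cast hbound
  · obtain ⟨p, hp⟩ := C.exists_walk_support_subset_supp (u := u) (w := w)
      (by simpa [ConnectedComponent.mem_supp_iff] using hu)
      (by simpa [ConnectedComponent.mem_supp_iff] using hw)
    exact ⟨p, fun x hx => by simpa [ConnectedComponent.mem_supp_iff] using hp x hx⟩
end

section
/- For all positive integers k, ℓ, r, in every r-edge-coloring of the complete bipartite graph K_{k,ℓ} there is a monochromatic double star of order at least (k+ℓ)/r. -/
/-!
Give the edge `uv` of colour `i` the weight `d_i(u) + d_i(v)`, where `d_i(w)` is the number of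
edges of colour `i` at `w`. Over the edges at a fixed vertex `v`, the terms `d_i(v)` add up to
`∑_i d_i(v)^2 ≥ k^2 / r` (Cauchy–Schwarz, as `∑_i d_i(v) = k`), so the total weight is at least
`l k^2 / r + k l^2 / r = k l (k + l) / r`, and some edge has weight at least `(k + l) / r`.
The colour-`i` double star centred at that edge contains the vertices counted by its weight.
-/

open Finset Fintype

variable {α β κ K : Type*} [Fintype α] [Fintype β] [Fintype κ] [DecidableEq κ]
  [Field K] [LinearOrder K] [IsStrictOrderedRing K]

lemma sq_card_div_card_le_sum_card_fiber (f : α → κ) :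
    (card α : K) ^ 2 / card κ ≤ ∑ a, (#{b | f b = f a} : K) := by
  have hfiber : ∑ a, (#{b | f b = f a} : K) = ∑ i, (#{b | f b = i} : K) ^ 2 := by
    rw [← sum_fiberwise univ f]
    refine Finset.sum_congr rfl fun i _ => ?_
    rw [Finset.sum_congr rfl fun a ha => by rw [(mem_filter.mp ha).2], sum_const, nsmul_eq_mul, sq]
  have hcard : ∑ i, (#{b | f b = i} : K) = card α := by
    exact_mod_cast (card_eq_sum_card_fiberwise fun a _ => mem_univ (f a)).symm
  rw [hfiber, ← hcard, ← pow_one (card κ : K), ← card_univ]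
  exact pow_sum_div_card_le_sum_pow (fun i _ => Nat.cast_nonneg _) 1

lemma mul_card_add_card_div_le_sum_monochromatic_degrees (c : α → β → κ) :
    (card α * card β * (card α + card β) : K) / card κ ≤
      ∑ p : α × β, ((#{x | c x p.2 = c p.1 p.2} : K) + #{y | c p.1 y = c p.1 p.2}) := by
  rw [sum_add_distrib]
  calc (card α * card β * (card α + card β) : K) / card κ
      = ∑ _b : β, (card α : K) ^ 2 / card κ + ∑ _a : α, (card β : K) ^ 2 / card κ := by
        simp only [sum_const, card_univ, nsmul_eq_mul]
        ring
    _ ≤ _ := by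
      rw [Fintype.sum_prod_type_right, Fintype.sum_prod_type]
      exact add_le_add (sum_le_sum fun b _ => sq_card_div_card_le_sum_card_fiber (c · b))
        (sum_le_sum fun a _ => sq_card_div_card_le_sum_card_fiber (c a))

theorem exists_card_add_card_div_le_monochromatic_degrees [Nonempty α] [Nonempty β]
    (c : α → β → κ) :
    ∃ a b, (card α + card β : K) / card κ ≤ #{x | c x b = c a b} + #{y | c a y = c a b} := by
  have hsum : ∑ _p : α × β, (card α + card β : K) / card κ ≤
      ∑ p : α × β, ((#{x | c x p.2 = c p.1 p.2} : K) + #{y | c p.1 y = c p.1 p.2}) := by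
    refine le_trans (le_of_eq ?_) (mul_card_add_card_div_le_sum_monochromatic_degrees c)
    simp only [sum_const, card_univ, card_prod, nsmul_eq_mul, Nat.cast_mul]
    ring
  obtain ⟨⟨a, b⟩, -, h⟩ := exists_le_of_sum_le univ_nonempty hsum
  exact ⟨a, b, h⟩

theorem bipartite_monochromatic_double_star_mubayi_general
    (k l r : ℕ) (hk : 1 ≤ k) (hl : 1 ≤ l)
    (c : Fin k → Fin l → Fin r) :
    ∃ (i : Fin r) (u : Fin k) (v : Fin l), c u v = i ∧
      ((k : ℚ) + (l : ℚ)) / (r : ℚ) ≤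
        (Finset.univ.filter (fun x : Fin k => x = u ∨ c x v = i)).card +
        (Finset.univ.filter (fun y : Fin l => y = v ∨ c u y = i)).card := by
  have : NeZero k := ⟨by omega⟩
  have : NeZero l := ⟨by omega⟩
  obtain ⟨u, v, h⟩ := exists_card_add_card_div_le_monochromatic_degrees (K := ℚ) c
  simp only [Fintype.card_fin] at h
  refine ⟨c u v, u, v, rfl, h.trans (add_le_add ?_ ?_)⟩ <;>
    exact_mod_cast card_le_card (monotone_filter_right _ fun _ _ => Or.inr)

/-- Mubayi's theorem: for positive integers `k`, `ℓ`, `r`, every `r`-edge-coloring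
of the complete bipartite graph `K_{k,ℓ}` (colored by `c : Fin k → Fin ℓ → Fin r`)
contains a monochromatic double star of order at least `(k+ℓ)/r`; the double star
in color `i` centered at the edge `uv` consists of `u`, `v`, and all vertices joined
to `u` or to `v` by an edge of color `i`. -/
theorem bipartite_monochromatic_double_star_mubayi
    (k l r : ℕ) (hk : 1 ≤ k) (hl : 1 ≤ l) (hr : 1 ≤ r)
    (c : Fin k → Fin l → Fin r) :
    ∃ (i : Fin r) (u : Fin k) (v : Fin l), c u v = i ∧
      ((k : ℚ) + (l : ℚ)) / (r : ℚ) ≤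
        (Finset.univ.filter (fun x : Fin k => x = u ∨ c x v = i)).card +
        (Finset.univ.filter (fun y : Fin l => y = v ∨ c u y = i)).card :=
  bipartite_monochromatic_double_star_mubayi_general k l r hk hl c
end

section
/- For every integer r ≥ 2, in every r-edge-coloring of the complete graph K_n on n vertices there is a monochromatic connected subgraph of diameter at most 5 on at least n/(r-1) vertices. -/
/-!
Let `U = B₂(a) ∪ B₂(b)` be the set of vertices within distance 2 (in color `i`) of an
`i`-colored edge `ab`; it has diameter at most 5 in color `i`. Suppose all such sets have fewer
than `n/(r-1)` vertices, put `A = B₁(a) ∪ B₁(b)` and choose `ab` minimising the excess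
`|U| - |A|`. No `i`-colored edge joins `A` to `B = V \ U`, so the `|A||B|` edges between them use
the other `r - 1` colors. By pigeonhole and Cauchy–Schwarz, some edge `a'b'` of one color `i'`
has `deg a' + deg b' ≥ (|A| + |B|)/(r-1) = (n - |U| + |A|)/(r-1)` in that bipartite graph. Those
two stars lie in the `A'` of `a'b'`, so the excess of `a'b'` is below `(|U| - |A|)/(r-1)`,
contradicting minimality.
-/

namespace SimpleGraph

variable {V : Type*} {G : SimpleGraph V}

theorem exists_walk_support_subset_ball {c v : V} {r : ℕ∞} (hv : v ∈ G.ball c r) :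
    ∃ p : G.Walk c v, (p.length : ℕ∞) < r ∧ ∀ x ∈ p.support, x ∈ G.ball c r := by
  classical
  rw [mem_ball, edist_comm] at hv
  obtain ⟨p, hp⟩ := exists_walk_of_edist_ne_top (ne_top_of_lt hv)
  refine ⟨p, hp ▸ hv, fun x hx => ?_⟩
  rw [mem_ball, edist_comm]
  calc G.edist c x ≤ (p.takeUntil x hx).length := edist_le _
    _ ≤ p.length := by exact_mod_cast p.length_takeUntil_le_length hx
    _ < r := hp ▸ hv

theorem mem_ball_add_one_of_adj {c x y : V} {r : ℕ∞} (hx : x ∈ G.ball c r) (hxy : G.Adj x y) :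
    y ∈ G.ball c (r + 1) := by
  rw [mem_ball] at hx ⊢
  calc G.edist y c ≤ G.edist y x + G.edist x c := G.edist_triangle
    _ = G.edist x c + 1 := by rw [edist_eq_one_iff_adj.2 hxy.symm, add_comm]
    _ < r + 1 := (ENat.add_lt_add_iff_right ENat.one_ne_top).2 hx

theorem exists_walk_of_mem_ball_of_mem_ball {S : Set V} {k l : ℕ} {w₁ w₂ u v : V}
    (hu : u ∈ G.ball w₁ (k + 1)) (hv : v ∈ G.ball w₂ (l + 1))
    (h₁ : G.ball w₁ (k + 1) ⊆ S) (h₂ : G.ball w₂ (l + 1) ⊆ S)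
    (m : G.Walk w₁ w₂) (hm : ∀ x ∈ m.support, x ∈ S) :
    ∃ p : G.Walk u v, p.length ≤ k + m.length + l ∧ ∀ x ∈ p.support, x ∈ S := by
  obtain ⟨p, hp, hpS⟩ := exists_walk_support_subset_ball hu
  obtain ⟨q, hq, hqS⟩ := exists_walk_support_subset_ball hv
  norm_cast at hp hq
  refine ⟨p.reverse.append (m.append q), by simp; omega, fun x hx => ?_⟩
  simp only [Walk.mem_support_append_iff, Walk.support_reverse, List.mem_reverse] at hx
  rcases hx with hx | hx | hx
  exacts [h₁ (hpS x hx), hm x hx, h₂ (hqS x hx)]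

-- `G.ball c r` is the open ball `edist < r`, so `G.edgeBall a b (k + 1)` is the set of vertices
-- within distance `k` of `a` or `b`.
def edgeBall (G : SimpleGraph V) (a b : V) (r : ℕ∞) : Set V := G.ball a r ∪ G.ball b r

theorem edgeBall_mono {a b : V} {r₁ r₂ : ℕ∞} (h : r₁ ≤ r₂) :
    G.edgeBall a b r₁ ⊆ G.edgeBall a b r₂ :=
  Set.union_subset_union (ball_mono h) (ball_mono h)

theorem left_mem_edgeBall {a b : V} {r : ℕ∞} (hr : 0 < r) : a ∈ G.edgeBall a b r :=
  Or.inl (mem_ball_self hr)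

theorem right_mem_edgeBall {a b : V} {r : ℕ∞} (hr : 0 < r) : b ∈ G.edgeBall a b r :=
  Or.inr (mem_ball_self hr)

theorem mem_edgeBall_add_one_of_adj {a b x y : V} {r : ℕ∞} (hx : x ∈ G.edgeBall a b r)
    (hxy : G.Adj x y) : y ∈ G.edgeBall a b (r + 1) :=
  hx.imp (mem_ball_add_one_of_adj · hxy) (mem_ball_add_one_of_adj · hxy)

theorem mem_edgeBall_two_of_adj_left {a b x : V} (hax : G.Adj a x) : x ∈ G.edgeBall a b 2 := by
  simpa [one_add_one_eq_two] using
    mem_edgeBall_add_one_of_adj (left_mem_edgeBall (b := b) (r := 1) zero_lt_one) hax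

theorem mem_edgeBall_two_of_adj_right {a b x : V} (hbx : G.Adj b x) : x ∈ G.edgeBall a b 2 := by
  simpa [one_add_one_eq_two] using
    mem_edgeBall_add_one_of_adj (right_mem_edgeBall (a := a) (r := 1) zero_lt_one) hbx

theorem exists_walk_of_mem_edgeBall {a b u v : V} {k : ℕ} (hab : G.Adj a b)
    (hu : u ∈ G.edgeBall a b (k + 1)) (hv : v ∈ G.edgeBall a b (k + 1)) :
    ∃ p : G.Walk u v, p.length ≤ 2 * k + 1 ∧ ∀ x ∈ p.support, x ∈ G.edgeBall a b (k + 1) := by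
  have ha : G.ball a (k + 1) ⊆ G.edgeBall a b (k + 1) := Set.subset_union_left
  have hb : G.ball b (k + 1) ⊆ G.edgeBall a b (k + 1) := Set.subset_union_right
  have ha' : a ∈ G.edgeBall a b (k + 1) := left_mem_edgeBall (by simp)
  have hb' : b ∈ G.edgeBall a b (k + 1) := right_mem_edgeBall (by simp)
  rcases hu with hu | hu <;> rcases hv with hv | hv
  · obtain ⟨p, hp, hpS⟩ := exists_walk_of_mem_ball_of_mem_ball hu hv ha ha .nil (by simp [ha'])
    exact ⟨p, by simp at hp; omega, hpS⟩
  · obtain ⟨p, hp, hpS⟩ :=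
      exists_walk_of_mem_ball_of_mem_ball hu hv ha hb hab.toWalk (by simp [ha', hb'])
    exact ⟨p, by simp at hp; omega, hpS⟩
  · obtain ⟨p, hp, hpS⟩ :=
      exists_walk_of_mem_ball_of_mem_ball hu hv hb ha hab.symm.toWalk (by simp [ha', hb'])
    exact ⟨p, by simp at hp; omega, hpS⟩
  · obtain ⟨p, hp, hpS⟩ := exists_walk_of_mem_ball_of_mem_ball hu hv hb hb .nil (by simp [hb'])
    exact ⟨p, by simp at hp; omega, hpS⟩

end SimpleGraph

namespace Finset

variable {α β κ : Type*} {s : Finset α} {t : Finset β}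

theorem sum_sum_bipartiteAbove_card_add_card (R : α → β → Prop) [∀ a b, Decidable (R a b)] :
    ∑ a ∈ s, ∑ b ∈ t.bipartiteAbove R a,
        ((#(t.bipartiteAbove R a) : ℚ) + #(s.bipartiteBelow R b)) =
      ∑ a ∈ s, (#(t.bipartiteAbove R a) : ℚ) ^ 2 + ∑ b ∈ t, (#(s.bipartiteBelow R b) : ℚ) ^ 2 := by
  have hbelow : ∑ b ∈ t, (#(s.bipartiteBelow R b) : ℚ) ^ 2 =
      ∑ a ∈ s, ∑ b ∈ t.bipartiteAbove R a, (#(s.bipartiteBelow R b) : ℚ) := by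
    rw [sum_sum_bipartiteAbove_eq_sum_sum_bipartiteBelow]
    simp [sq]
  rw [hbelow, ← sum_add_distrib]
  refine sum_congr rfl fun a _ => ?_
  rw [sum_add_distrib, sum_const, nsmul_eq_mul, sq]

-- Summing `deg a + deg b` over the edges gives `∑ deg² ≥ e²/|s| + e²/|t|` by Cauchy–Schwarz.
theorem exists_rel_div_card_add_div_card_le (R : α → β → Prop) [∀ a b, Decidable (R a b)]
    {e : ℚ} (he : 0 < e) (heE : e ≤ ∑ a ∈ s, #(t.bipartiteAbove R a)) :
    ∃ a ∈ s, ∃ b ∈ t, R a b ∧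
      e / #s + e / #t ≤ #(t.bipartiteAbove R a) + #(s.bipartiteBelow R b) := by
  set E : ℕ := ∑ a ∈ s, #(t.bipartiteAbove R a) with hE
  have hsigma : (s.sigma (t.bipartiteAbove R ·)).Nonempty := by
    rw [← card_pos, card_sigma, ← Nat.cast_pos (α := ℚ)]
    exact he.trans_le heE
  obtain ⟨a₀, ha₀, b₀, hb₀⟩ := sigma_nonempty.1 hsigma
  have hs : (0 : ℚ) < #s := by exact_mod_cast card_pos.2 ⟨a₀, ha₀⟩
  have ht : (0 : ℚ) < #t := by exact_mod_cast card_pos.2 ⟨b₀, ((mem_bipartiteAbove R).1 hb₀).1⟩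
  have hCS : (E : ℚ) ^ 2 / #s + (E : ℚ) ^ 2 / #t ≤
      ∑ a ∈ s, (#(t.bipartiteAbove R a) : ℚ) ^ 2 + ∑ b ∈ t, (#(s.bipartiteBelow R b) : ℚ) ^ 2 := by
    gcongr
    · rw [div_le_iff₀' hs, hE]
      exact_mod_cast sq_sum_le_card_mul_sum_sq
    · rw [div_le_iff₀' ht, hE, sum_card_bipartiteAbove_eq_sum_card_bipartiteBelow]
      exact_mod_cast sq_sum_le_card_mul_sum_sq
  have hsum : ∑ _p ∈ s.sigma (t.bipartiteAbove R ·), (e / #s + e / #t) ≤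
      ∑ p ∈ s.sigma (t.bipartiteAbove R ·),
        ((#(t.bipartiteAbove R p.1) : ℚ) + #(s.bipartiteBelow R p.2)) := by
    rw [sum_const, card_sigma, sum_sigma, nsmul_eq_mul, sum_sum_bipartiteAbove_card_add_card, ← hE]
    refine le_trans ?_ hCS
    rw [sq, mul_div_assoc, mul_div_assoc, ← mul_add]
    exact mul_le_mul_of_nonneg_left (by gcongr) (Nat.cast_nonneg _)
  obtain ⟨⟨a, b⟩, hab, hle⟩ := exists_le_of_sum_le hsigma hsum
  rw [mem_sigma, mem_bipartiteAbove] at hab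
  exact ⟨a, hab.1, b, hab.2.1, hab.2.2, hle⟩

theorem exists_color_div_card_le_card_add_card [DecidableEq κ] {col : α → β → κ} {T : Finset κ}
    (hs : s.Nonempty) (ht : t.Nonempty) (hcol : ∀ a ∈ s, ∀ b ∈ t, col a b ∈ T) :
    ∃ a ∈ s, ∃ b ∈ t, col a b ∈ T ∧
      ((#s + #t : ℕ) : ℚ) / #T ≤
        #{b' ∈ t | col a b' = col a b} + #{a' ∈ s | col a' b = col a b} := by
  have hs' : (0 : ℚ) < #s := by exact_mod_cast hs.card_pos
  have ht' : (0 : ℚ) < #t := by exact_mod_cast ht.card_pos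
  have hT : (0 : ℚ) < #T := by
    exact_mod_cast card_pos.2 ⟨_, hcol _ hs.choose_spec _ ht.choose_spec⟩
  obtain ⟨k, hk, hfiber⟩ := exists_le_card_fiber_of_nsmul_le_card_of_maps_to
    (s := s ×ˢ t) (f := fun p => col p.1 p.2) (b := ((#s * #t : ℕ) : ℚ) / #T)
    (fun p hp => hcol _ (mem_product.1 hp).1 _ (mem_product.1 hp).2)
    (card_pos.1 (by exact_mod_cast hT))
    (by rw [nsmul_eq_mul, card_product, mul_div_cancel₀ _ hT.ne'])
  have hfiber_eq : #{p ∈ s ×ˢ t | col p.1 p.2 = k} =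
      ∑ a ∈ s, #(t.bipartiteAbove (fun a b => col a b = k) a) := by
    simp only [card_filter, sum_product, bipartiteAbove]
  obtain ⟨a, ha, b, hb, rfl, hle⟩ := exists_rel_div_card_add_div_card_le
    (fun a b => col a b = k) (by positivity) (hfiber_eq ▸ hfiber)
  refine ⟨a, ha, b, hb, hk, le_of_eq_of_le ?_ hle⟩
  field_simp
  push_cast
  ring

end Finset

section Coloring

open Finset SimpleGraph

variable {n r : ℕ} (c : Sym2 (Fin n) → Fin r)

theorem colorGraph_adj {i : Fin r} {u v : Fin n} :
    (colorGraph c i).Adj u v ↔ u ≠ v ∧ c s(u, v) = i := Iff.rfl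

noncomputable def edgeBallExcess (i : Fin r) (a b : Fin n) : ℕ :=
  ((colorGraph c i).edgeBall a b 3).ncard - ((colorGraph c i).edgeBall a b 2).ncard

theorem cast_edgeBallExcess (i : Fin r) (a b : Fin n) :
    (edgeBallExcess c i a b : ℚ) =
      ((colorGraph c i).edgeBall a b 3).ncard - ((colorGraph c i).edgeBall a b 2).ncard := by
  rw [edgeBallExcess, Nat.cast_sub (Set.ncard_le_ncard (edgeBall_mono (by norm_num)))]

variable {c}

theorem card_filter_add_card_filter_le_ncard_edgeBall_two {A B : Finset (Fin n)}
    (hAB : Disjoint A B) {i : Fin r} {x y : Fin n} (hx : x ∈ A) (hy : y ∈ B) :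
    #{b ∈ B | c s(x, b) = i} + #{a ∈ A | c s(a, y) = i} ≤
      ((colorGraph c i).edgeBall x y 2).ncard := by
  classical
  have hleft : {b ∈ B | c s(x, b) = i} ⊆ ((colorGraph c i).edgeBall x y 2).toFinset := by
    intro b hb
    rw [mem_filter] at hb
    have hne : x ≠ b := fun h => disjoint_left.1 hAB hx (h ▸ hb.1)
    exact Set.mem_toFinset.2 (mem_edgeBall_two_of_adj_left ((colorGraph_adj c).2 ⟨hne, hb.2⟩))
  have hright : {a ∈ A | c s(a, y) = i} ⊆ ((colorGraph c i).edgeBall x y 2).toFinset := by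
    intro a ha
    rw [mem_filter] at ha
    have hne : y ≠ a := fun h => disjoint_left.1 hAB (h ▸ ha.1) hy
    exact Set.mem_toFinset.2 (mem_edgeBall_two_of_adj_right
      ((colorGraph_adj c).2 ⟨hne, by rw [Sym2.eq_swap]; exact ha.2⟩))
  rw [← card_union_of_disjoint (hAB.symm.mono (filter_subset _ _) (filter_subset _ _)),
    Set.ncard_eq_toFinset_card']
  exact card_le_card (union_subset hleft hright)

theorem exists_adj_le_ncard_edgeBall_two {j : Fin r} {a b : Fin n}
    (hU : ((colorGraph c j).edgeBall a b 3).ncard < n) :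
    ∃ j' a' b', (colorGraph c j').Adj a' b' ∧
      ((n : ℚ) - edgeBallExcess c j a b) / ((r : ℚ) - 1) ≤
        ((colorGraph c j').edgeBall a' b' 2).ncard := by
  classical
  set G := colorGraph c j
  set A := (G.edgeBall a b 2).toFinset
  set B := (G.edgeBall a b 3)ᶜ.toFinset
  have hAB : Disjoint A B :=
    Set.disjoint_toFinset.2 (Set.disjoint_compl_right_iff_subset.2 (edgeBall_mono (by norm_num)))
  have hA : A.Nonempty := ⟨a, Set.mem_toFinset.2 (left_mem_edgeBall (by norm_num))⟩
  have hB : B.Nonempty := by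
    refine Set.toFinset_nonempty.2 (Set.nonempty_compl.2 fun h => ?_)
    simp [h] at hU
  have hcross : ∀ x ∈ A, ∀ y ∈ B, c s(x, y) ∈ univ.erase j := by
    intro x hx y hy
    refine mem_erase.2 ⟨fun hxy => ?_, mem_univ _⟩
    simp only [A, B, Set.mem_toFinset, Set.mem_compl_iff] at hx hy
    have hne : x ≠ y := by rintro rfl; exact hy (edgeBall_mono (by norm_num) hx)
    exact hy (mem_edgeBall_add_one_of_adj hx ⟨hne, hxy⟩)
  obtain ⟨x, hx, y, hy, -, hstar⟩ := exists_color_div_card_le_card_add_card hA hB hcross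
  have hcardA : (#A : ℚ) = (G.edgeBall a b 2).ncard := by
    rw [Set.ncard_eq_toFinset_card']
  have hcardB : (#B : ℚ) = n - (G.edgeBall a b 3).ncard := by
    rw [← Set.ncard_eq_toFinset_card', Set.ncard_compl, Nat.card_fin, Nat.cast_sub hU.le]
  have hcardT : (#(univ.erase j) : ℚ) = r - 1 := by
    rw [card_erase_of_mem (mem_univ _), card_univ, Fintype.card_fin, Nat.cast_sub j.pos]
    norm_num
  refine ⟨c s(x, y), x, y, ⟨fun h => disjoint_left.1 hAB hx (h ▸ hy), rfl⟩, ?_⟩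
  calc ((n : ℚ) - edgeBallExcess c j a b) / ((r : ℚ) - 1)
      = ((#A + #B : ℕ) : ℚ) / #(univ.erase j) := by
        rw [cast_edgeBallExcess, hcardT]; push_cast; rw [hcardA, hcardB]; ring
    _ ≤ _ := hstar
    _ ≤ _ := by exact_mod_cast card_filter_add_card_filter_le_ncard_edgeBall_two hAB hx hy

theorem exists_edgeBallExcess_lt (hr : 2 ≤ r)
    (hsmall : ∀ i a b, (colorGraph c i).Adj a b →
      (((colorGraph c i).edgeBall a b 3).ncard : ℚ) < n / ((r : ℚ) - 1))
    {j : Fin r} {a b : Fin n} (hab : (colorGraph c j).Adj a b) :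
    ∃ j' a' b', (colorGraph c j').Adj a' b' ∧
      edgeBallExcess c j' a' b' < edgeBallExcess c j a b := by
  have hρ : (1 : ℚ) ≤ r - 1 := by rw [le_sub_iff_add_le]; exact_mod_cast hr
  have hU : ((colorGraph c j).edgeBall a b 3).ncard < n := by
    exact_mod_cast (hsmall j a b hab).trans_le (div_le_self (Nat.cast_nonneg n) hρ)
  obtain ⟨j', a', b', hab', hA'⟩ := exists_adj_le_ncard_edgeBall_two hU
  refine ⟨j', a', b', hab', ?_⟩
  have hU' := hsmall j' a' b' hab'
  rw [← Nat.cast_lt (α := ℚ), cast_edgeBallExcess]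
  set f : ℚ := (edgeBallExcess c j a b : ℚ)
  calc (((colorGraph c j').edgeBall a' b' 3).ncard : ℚ) -
        ((colorGraph c j').edgeBall a' b' 2).ncard
      < n / ((r : ℚ) - 1) - (n - f) / ((r : ℚ) - 1) := by linarith
    _ = f / ((r : ℚ) - 1) := by ring
    _ ≤ f := div_le_self (Nat.cast_nonneg _) hρ

theorem exists_adj_le_ncard_edgeBall_three (hr : 2 ≤ r) (hn : 2 ≤ n) :
    ∃ i a b, (colorGraph c i).Adj a b ∧
      (n : ℚ) / ((r : ℚ) - 1) ≤ ((colorGraph c i).edgeBall a b 3).ncard := by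
  by_contra! hsmall
  have descent : ∀ m i a b, (colorGraph c i).Adj a b → edgeBallExcess c i a b ≠ m := by
    intro m
    induction m using Nat.strong_induction_on with
    | _ m ih =>
      rintro i a b hab rfl
      obtain ⟨j, a', b', hab', hlt⟩ := exists_edgeBallExcess_lt hr hsmall hab
      exact ih _ hlt j a' b' hab' rfl
  let u : Fin n := ⟨0, by omega⟩
  let v : Fin n := ⟨1, by omega⟩
  exact descent _ (c s(u, v)) u v ⟨by simp [u, v, Fin.ext_iff], rfl⟩ rfl

end Coloring

/-- Ruszinkó's theorem: for `r ≥ 2`, every `r`-edge-coloring of `K_n` contains a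
monochromatic connected subgraph of diameter at most 5 on at least `n/(r-1)`
vertices. -/
theorem monochromatic_diam_five_ruszinko
    (n r : ℕ) (hr : 2 ≤ r) (c : Sym2 (Fin n) → Fin r) :
    ∃ (i : Fin r) (S : Finset (Fin n)),
      (n : ℚ) / ((r : ℚ) - 1) ≤ S.card ∧
      ∀ u ∈ S, ∀ v ∈ S, ∃ p : (colorGraph c i).Walk u v,
        p.length ≤ 5 ∧ ∀ x ∈ p.support, x ∈ S := by
  classical
  rcases lt_or_ge n 2 with hn | hn
  · have : Subsingleton (Fin n) := Fin.subsingleton_iff_le_one.2 (by omega)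
    refine ⟨⟨0, by omega⟩, Finset.univ, ?_, fun u _ v _ => ?_⟩
    · simpa using div_le_self (Nat.cast_nonneg (α := ℚ) n)
        (by rw [le_sub_iff_add_le]; exact_mod_cast hr)
    · obtain rfl := Subsingleton.elim u v
      exact ⟨.nil, by simp, by simp⟩
  · obtain ⟨i, a, b, hab, hlarge⟩ := exists_adj_le_ncard_edgeBall_three (c := c) hr hn
    refine ⟨i, ((colorGraph c i).edgeBall a b 3).toFinset, ?_, fun u hu v hv => ?_⟩
    · rwa [← Set.ncard_eq_toFinset_card']
    · have h3 : ((2 : ℕ) : ℕ∞) + 1 = 3 := rfl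
      rw [Set.mem_toFinset, ← h3] at hu hv
      obtain ⟨p, hp, hpS⟩ := SimpleGraph.exists_walk_of_mem_edgeBall hab hu hv
      exact ⟨p, hp, fun x hx => Set.mem_toFinset.2 (h3 ▸ hpS x hx)⟩
end

section
/- Let a 3-edge-coloring of the complete graph K_n on n vertices be given in which every color class is a spanning connected subgraph. If some color class contains two vertices at distance at least 5 in that color class, then there is a monochromatic connected subgraph of diameter at most 3 on at least n/2 vertices. -/
open Finset

namespace SimpleGraph

variable {V : Type*} (G : SimpleGraph V)

open Classical in
noncomputable def doubleStar [Fintype V] (a b : V) : Finset V :=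
  {x | x = a ∨ x = b ∨ G.Adj x a ∨ G.Adj x b}

variable {G} {a b x y : V}

lemma Adj.dist_le_add_one (h : G.Adj a b) (x : V) : G.dist a x ≤ G.dist b x + 1 := by
  have := h.reachable.dist_triangle_left x
  rw [dist_eq_one_iff_adj.mpr h] at this
  omega

lemma exists_walk_length_le_one_of_eq_or_adj {S : Finset V} (hx : x ∈ S) (hy : y ∈ S)
    (h : x = y ∨ G.Adj x y) :
    ∃ p : G.Walk x y, p.length ≤ 1 ∧ ∀ z ∈ p.support, z ∈ S := by
  rcases h with rfl | h
  · exact ⟨.nil, by simp, by simpa using hx⟩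
  · exact ⟨h.toWalk, by simp, by simp [hx, hy]⟩

variable [Fintype V]

@[simp]
lemma mem_doubleStar : x ∈ G.doubleStar a b ↔ x = a ∨ x = b ∨ G.Adj x a ∨ G.Adj x b := by
  simp [doubleStar]

lemma doubleStar_comm : G.doubleStar a b = G.doubleStar b a := by
  ext; simp only [mem_doubleStar]; tauto

lemma exists_walk_length_le_three_of_mem_doubleStar (hab : a = b ∨ G.Adj a b)
    (hx : x ∈ G.doubleStar a b) (hy : y ∈ G.doubleStar a b) :
    ∃ p : G.Walk x y, p.length ≤ 3 ∧ ∀ z ∈ p.support, z ∈ G.doubleStar a b := by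
  have center (x) (hx : x ∈ G.doubleStar a b) :
      ∃ w ∈ G.doubleStar a b, (w = a ∨ w = b) ∧ (x = w ∨ G.Adj x w) := by
    rcases mem_doubleStar.mp hx with h | h | h | h
    exacts [⟨a, by simp, .inl rfl, .inl h⟩, ⟨b, by simp, .inr rfl, .inl h⟩,
      ⟨a, by simp, .inl rfl, .inr h⟩, ⟨b, by simp, .inr rfl, .inr h⟩]
  obtain ⟨w, hw, hwab, hxw⟩ := center x hx
  obtain ⟨w', hw', hwab', hyw'⟩ := center y hy
  have hww' : w = w' ∨ G.Adj w w' := by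
    rcases hwab with rfl | rfl <;> rcases hwab' with rfl | rfl
    exacts [.inl rfl, hab, hab.imp Eq.symm Adj.symm, .inl rfl]
  obtain ⟨p₁, hp₁, hp₁S⟩ := exists_walk_length_le_one_of_eq_or_adj hx hw hxw
  obtain ⟨p₂, hp₂, hp₂S⟩ := exists_walk_length_le_one_of_eq_or_adj hw hw' hww'
  obtain ⟨p₃, hp₃, hp₃S⟩ :=
    exists_walk_length_le_one_of_eq_or_adj hw' hy (hyw'.imp Eq.symm Adj.symm)
  refine ⟨p₁.append (p₂.append p₃), ?_, fun z hz => ?_⟩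
  · simp only [Walk.length_append]
    omega
  simp only [Walk.mem_support_append_iff] at hz
  rcases hz with hz | hz | hz
  exacts [hp₁S z hz, hp₂S z hz, hp₃S z hz]

end SimpleGraph

lemma Finset.exists_card_le_two_mul_card_of_cyclic {α : Type*} [Fintype α] [DecidableEq α]
    (A : Fin 4 → Finset α)
    (hA : ∀ t x, x ∉ A t → x ∉ A (t + 1) → x ∈ A (t + 2) ∧ x ∈ A (t + 3)) :
    ∃ t, Fintype.card α ≤ 2 * #(A t) := by
  have two_le (x : α) : 2 ≤ #{t | x ∈ A t} := by
    have h₀ := hA 0 x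
    have h₁ := hA 1 x
    have h₂ := hA 2 x
    have h₃ := hA 3 x
    simp only [Fin.reduceAdd] at h₀ h₁ h₂ h₃
    rw [card_filter, Fin.sum_univ_four]
    split_ifs <;> simp_all
  have double_count : ∑ x : α, #{t | x ∈ A t} = ∑ t, #(A t) := by
    simpa [bipartiteAbove, bipartiteBelow] using
      sum_card_bipartiteAbove_eq_sum_card_bipartiteBelow (s := (univ : Finset α))
        (t := (univ : Finset (Fin 4))) (r := fun x t => x ∈ A t)
  by_contra! h
  have := (sum_le_sum fun x (_ : x ∈ univ) => two_le x).trans_eq double_count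
  simp only [sum_const, card_univ, smul_eq_mul, Fin.sum_univ_four] at this
  have := h 0; have := h 1; have := h 2; have := h 3
  omega

lemma Fin.exists_ne_and_ne_of_three (i j : Fin 3) : ∃ k, i ≠ k ∧ j ≠ k := by
  revert i j; decide

open SimpleGraph

section Colorings

variable {n r : ℕ} {c : Sym2 (Fin n) → Fin r} {a b z : Fin n}

lemma mem_doubleStar_colorGraph {κ : Fin r} :
    z ∈ (colorGraph c κ).doubleStar a b ↔
      z = a ∨ z = b ∨ c s(z, a) = κ ∨ c s(z, b) = κ := by
  simp only [mem_doubleStar, colorGraph]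
  tauto

lemma ne_and_color_ne_of_one_lt_dist {i : Fin r} (h : 1 < (colorGraph c i).dist a b) :
    a ≠ b ∧ c s(a, b) ≠ i := by
  have hab : a ≠ b := by rintro rfl; simp at h
  refine ⟨hab, fun hi => ?_⟩
  have : (colorGraph c i).dist a b = 1 := dist_eq_one_iff_adj.mpr ⟨hab, hi⟩
  omega

lemma color_ne_of_three_le_dist {i : Fin r} (hab : 3 ≤ (colorGraph c i).dist a b)
    (hza : z ≠ a) (hzb : z ≠ b) (ha : c s(z, a) = i) : c s(z, b) ≠ i := by
  intro hb
  have haz : (colorGraph c i).Adj a z := (show (colorGraph c i).Adj z a from ⟨hza, ha⟩).symm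
  have : (colorGraph c i).dist a b ≤ 2 :=
    dist_le (.cons haz (show (colorGraph c i).Adj z b from ⟨hzb, hb⟩).toWalk)
  omega

end Colorings

section ThreeColorings

variable {n : ℕ} {c : Sym2 (Fin n) → Fin 3} {i j k : Fin 3} {a b d z : Fin n}

lemma adj_of_notMem_doubleStar (hij : i ≠ j) (hik : i ≠ k) (hjk : j ≠ k)
    (hab : 3 ≤ (colorGraph c i).dist a b) (hz : z ∉ (colorGraph c j).doubleStar a b)
    (hzb : c s(z, b) ≠ k) : (colorGraph c i).Adj z b ∧ (colorGraph c k).Adj z a := by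
  simp only [mem_doubleStar_colorGraph, not_or] at hz
  obtain ⟨hza, hzb', hzaj, hzbj⟩ := hz
  have hb : c s(z, b) = i := by omega
  have := color_ne_of_three_le_dist (SimpleGraph.dist_comm ▸ hab) hzb' hza hb
  exact ⟨⟨hzb', hb⟩, hza, by omega⟩

lemma mem_doubleStar_of_notMem_doubleStar (hij : i ≠ j) (hik : i ≠ k) (hjk : j ≠ k)
    (hab : 3 ≤ (colorGraph c i).dist a b) (hbd : 3 ≤ (colorGraph c i).dist b d)
    (h₁ : z ∉ (colorGraph c j).doubleStar a b) (h₂ : z ∉ (colorGraph c k).doubleStar b d)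
    (e : Fin n) :
    z ∈ (colorGraph c j).doubleStar d e ∧ z ∈ (colorGraph c k).doubleStar e a := by
  have hzb : c s(z, b) ≠ k := fun h => h₂ (mem_doubleStar_colorGraph.mpr (by simp [h]))
  obtain ⟨hb, ha⟩ := adj_of_notMem_doubleStar hij hik hjk hab h₁ hzb
  rw [doubleStar_comm] at h₂
  obtain ⟨-, hd⟩ := adj_of_notMem_doubleStar hik hij hjk.symm (SimpleGraph.dist_comm ▸ hbd)
    h₂ fun h => hij (hb.2.symm.trans h)
  simp [ha, hd]

lemma exists_large_doubleStar_of_square (hij : i ≠ j) (hik : i ≠ k) (hjk : j ≠ k)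
    {u v w x : Fin n} (huv : (colorGraph c j).Adj u v) (hvw : (colorGraph c k).Adj v w)
    (hwx : (colorGraph c j).Adj w x) (hxu : (colorGraph c k).Adj x u)
    (duv : 3 ≤ (colorGraph c i).dist u v) (dvw : 3 ≤ (colorGraph c i).dist v w)
    (dwx : 3 ≤ (colorGraph c i).dist w x) (dxu : 3 ≤ (colorGraph c i).dist x u) :
    ∃ κ a b, (colorGraph c κ).Adj a b ∧ n ≤ 2 * #((colorGraph c κ).doubleStar a b) := by
  let A : Fin 4 → Finset (Fin n) := ![(colorGraph c j).doubleStar u v,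
    (colorGraph c k).doubleStar v w, (colorGraph c j).doubleStar w x,
    (colorGraph c k).doubleStar x u]
  obtain ⟨t, ht⟩ := exists_card_le_two_mul_card_of_cyclic A fun t z h₁ h₂ => by
    fin_cases t
    · exact mem_doubleStar_of_notMem_doubleStar hij hik hjk duv dvw h₁ h₂ x
    · exact mem_doubleStar_of_notMem_doubleStar hik hij hjk.symm dvw dwx h₁ h₂ u
    · exact mem_doubleStar_of_notMem_doubleStar hij hik hjk dwx dxu h₁ h₂ v
    · exact mem_doubleStar_of_notMem_doubleStar hik hij hjk.symm dxu duv h₁ h₂ w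
  rw [Fintype.card_fin] at ht
  fin_cases t
  exacts [⟨j, u, v, huv, ht⟩, ⟨k, v, w, hvw, ht⟩, ⟨j, w, x, hwx, ht⟩,
    ⟨k, x, u, hxu, ht⟩]

lemma exists_large_doubleStar_of_square_diagonals (hij : i ≠ j) (hik : i ≠ k) (hjk : j ≠ k)
    {u v x y : Fin n} (hd : 5 ≤ (colorGraph c i).dist u v) (huv : (colorGraph c j).Adj u v)
    (hyu : (colorGraph c i).Adj y u) (hyv : (colorGraph c k).Adj y v)
    (hxv : (colorGraph c i).Adj x v) (hxu : (colorGraph c k).Adj x u) (hyx : c s(y, x) ≠ k) :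
    ∃ κ a b, (colorGraph c κ).Adj a b ∧ n ≤ 2 * #((colorGraph c κ).doubleStar a b) := by
  have dvy : 4 ≤ (colorGraph c i).dist v y := by
    have := hyu.symm.dist_le_add_one v
    rw [SimpleGraph.dist_comm]
    omega
  have dxu : 4 ≤ (colorGraph c i).dist x u := by
    have := hxv.symm.dist_le_add_one u
    rw [SimpleGraph.dist_comm] at hd
    omega
  have dyx : 3 ≤ (colorGraph c i).dist y x := by
    have := hyu.symm.dist_le_add_one x
    rw [SimpleGraph.dist_comm] at dxu
    omega
  obtain ⟨hne, hi⟩ := ne_and_color_ne_of_one_lt_dist (by omega : 1 < (colorGraph c i).dist y x)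
  exact exists_large_doubleStar_of_square hij hik hjk huv hyv.symm ⟨hne, by omega⟩ hxu
    (by omega) (by omega) dyx (by omega)

lemma exists_large_doubleStar_of_five_le_dist {u v : Fin n}
    (hd : 5 ≤ (colorGraph c i).dist u v) :
    ∃ κ a b, (a = b ∨ (colorGraph c κ).Adj a b) ∧
      n ≤ 2 * #((colorGraph c κ).doubleStar a b) := by
  obtain ⟨huv, hji⟩ := ne_and_color_ne_of_one_lt_dist (by omega : 1 < (colorGraph c i).dist u v)
  set j := c s(u, v)
  obtain ⟨k, hik, hjk⟩ := Fin.exists_ne_and_ne_of_three i j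
  by_contra! small
  set B := ((colorGraph c j).doubleStar u v)ᶜ
  have not_covered (κ : Fin 3) (a b : Fin n) (hab : a = b ∨ (colorGraph c κ).Adj a b) :
      ¬B ⊆ (colorGraph c κ).doubleStar a b := fun hB => by
    have := card_le_card hB
    have := small j u v (.inr ⟨huv, rfl⟩)
    have := small κ a b hab
    rw [card_compl, Fintype.card_fin] at *
    omega
  obtain ⟨y, hyB, hy⟩ := Finset.not_subset.mp (not_covered k u u (.inl rfl))
  rw [mem_compl, doubleStar_comm] at hyB
  obtain ⟨hyu, hyv⟩ := adj_of_notMem_doubleStar hji.symm hik hjk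
    (by rw [SimpleGraph.dist_comm]; omega) hyB
    fun h => hy (mem_doubleStar_colorGraph.mpr (by simp [h]))
  obtain ⟨x, hxB, hx⟩ := Finset.not_subset.mp (not_covered k v y (.inr hyv.symm))
  rw [mem_compl] at hxB
  obtain ⟨hxv, hxu⟩ := adj_of_notMem_doubleStar hji.symm hik hjk (by omega) hxB
    fun h => hx (mem_doubleStar_colorGraph.mpr (by simp [h]))
  have hyx : c s(y, x) ≠ k := fun h =>
    hx (mem_doubleStar_colorGraph.mpr (by simp [Sym2.eq_swap, h]))
  obtain ⟨κ, a, b, hab, h⟩ := exists_large_doubleStar_of_square_diagonals hji.symm hik hjk hd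
    ⟨huv, rfl⟩ hyu hyv hxv hxu hyx
  exact (small κ a b (.inr hab)).not_ge h

end ThreeColorings

theorem monochromatic_diam_three_of_far_vertices_general
    (n : ℕ) (c : Sym2 (Fin n) → Fin 3)
    (hfar : ∃ (i : Fin 3) (u v : Fin n), 5 ≤ (colorGraph c i).dist u v) :
    ∃ (i : Fin 3) (S : Finset (Fin n)),
      (n : ℚ) / 2 ≤ S.card ∧
      ∀ u ∈ S, ∀ v ∈ S, ∃ p : (colorGraph c i).Walk u v,
        p.length ≤ 3 ∧ ∀ x ∈ p.support, x ∈ S := by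
  obtain ⟨i, u, v, hd⟩ := hfar
  obtain ⟨κ, a, b, hab, hcard⟩ := exists_large_doubleStar_of_five_le_dist hd
  refine ⟨κ, (colorGraph c κ).doubleStar a b, ?_, fun x hx y hy =>
    exists_walk_length_le_three_of_mem_doubleStar hab hx hy⟩
  rw [div_le_iff₀ two_pos]
  exact_mod_cast (by omega : n ≤ #((colorGraph c κ).doubleStar a b) * 2)

/-- Given a 3-edge-coloring of `K_n` in which every color class is spanning
connected, if some color class has two vertices at distance at least 5, then
there is a monochromatic connected subgraph of diameter at most 3 on at least
`n/2` vertices. -/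
theorem monochromatic_diam_three_of_far_vertices
    (n : ℕ) (c : Sym2 (Fin n) → Fin 3)
    (hconn : ∀ (i : Fin 3) (u v : Fin n), (colorGraph c i).Reachable u v)
    (hfar : ∃ (i : Fin 3) (u v : Fin n), 5 ≤ (colorGraph c i).dist u v) :
    ∃ (i : Fin 3) (S : Finset (Fin n)),
      (n : ℚ) / 2 ≤ S.card ∧
      ∀ u ∈ S, ∀ v ∈ S, ∃ p : (colorGraph c i).Walk u v,
        p.length ≤ 3 ∧ ∀ x ∈ p.support, x ∈ S :=
  monochromatic_diam_three_of_far_vertices_general n c hfar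
end
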